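/- arXiv:1304.6450 — 4 statements merged into one kernel-verified Lean document; each statement's English description precedes it below -/
import Mathlib

section
/- Let G be a finite cograph, i.e., a finite simple graph with no induced subgraph isomorphic to the path P₄ on four vertices. Then γ^i(G) equals the number of connected components of G. -/
/-- `A` dominates `B` in `G`: every vertex of `B` lies in the closed
neighborhood of some vertex of `A`. -/
def Dominates {V : Type*} (G : SimpleGraph V) (A B : Finset V) : Prop :=
  ∀ b ∈ B, ∃ a ∈ A, a = b ∨ G.Adj a b

/-- `γ_G(B)`: the minimum cardinality of a set of vertices dominating `B`. -/
noncomputable def domNum {V : Type*} (G : SimpleGraph V) (B : Finset V) : ℕ :=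
  sInf {n | ∃ A : Finset V, A.card = n ∧ Dominates G A B}

/-- The domination number `γ(G)`. -/
noncomputable def gamma {V : Type*} [Fintype V] (G : SimpleGraph V) : ℕ :=
  domNum G Finset.univ

/-- `A` is an independent set in `G`. -/
def IndepIn {V : Type*} (G : SimpleGraph V) (A : Finset V) : Prop :=
  ∀ x ∈ A, ∀ y ∈ A, ¬ G.Adj x y

/-- The independence-domination number `γ^i(G)`. -/
noncomputable def gammaI {V : Type*} (G : SimpleGraph V) : ℕ :=
  sSup {n | ∃ A : Finset V, IndepIn G A ∧ domNum G A = n}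

/-!
In a `P₄`-free graph any two non-adjacent vertices of a component have a common neighbour.
Hence the vertices of an independent set `S` lying in one component are dominated by a single
vertex: a vertex `v` of the component dominating the most of them must dominate all, since for an
undominated `a` and a common neighbour `w` of `v` and `a`, `w` dominates everything `v` does (or
there is an induced `P₄`) and also `a`. So every independent set is dominated by one vertex per
component. Conversely, one representative per component is an independent set, and a vertex only
dominates vertices of its own component, so it needs a dominator in every component.
-/

open SimpleGraph Finset

namespace SimpleGraph

variable {V : Type*} {G : SimpleGraph V}

lemma pathGraph_four_isIndContained {x₀ x₁ x₂ x₃ : V}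
    (h₀₁ : G.Adj x₀ x₁) (h₁₂ : G.Adj x₁ x₂) (h₂₃ : G.Adj x₂ x₃)
    (n₀₂ : ¬ G.Adj x₀ x₂) (n₀₃ : ¬ G.Adj x₀ x₃) (n₁₃ : ¬ G.Adj x₁ x₃) :
    pathGraph 4 ⊴ G := by
  have d₀₂ : x₀ ≠ x₂ := by rintro rfl; exact n₀₃ h₂₃
  have d₀₃ : x₀ ≠ x₃ := by rintro rfl; exact n₀₂ h₂₃.symm
  have d₁₃ : x₁ ≠ x₃ := by rintro rfl; exact n₀₃ h₀₁
  have d₀₁ := G.ne_of_adj h₀₁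
  have d₁₂ := G.ne_of_adj h₁₂
  have d₂₃ := G.ne_of_adj h₂₃
  refine ⟨⟨⟨![x₀, x₁, x₂, x₃], fun a b h => ?_⟩, fun {a b} => ?_⟩⟩
  · fin_cases a <;> fin_cases b <;> simp_all
  · change G.Adj (![x₀, x₁, x₂, x₃] a) (![x₀, x₁, x₂, x₃] b) ↔ _
    fin_cases a <;> fin_cases b <;>
      simp [pathGraph_adj, h₀₁, h₁₂, h₂₃, h₀₁.symm, h₁₂.symm, h₂₃.symm,
        n₀₂, n₀₃, n₁₃, mt G.adj_symm n₀₂, mt G.adj_symm n₀₃, mt G.adj_symm n₁₃]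

lemma exists_adj_adj_of_reachable (hP₄ : ¬ pathGraph 4 ⊴ G) {u v : V} (huv : G.Reachable u v)
    (hne : u ≠ v) (hnadj : ¬ G.Adj u v) : ∃ w, G.Adj u w ∧ G.Adj w v := by
  obtain ⟨p⟩ := huv
  induction p with
  | nil => exact absurd rfl hne
  | @cons u x v hux q ih =>
    by_cases hxv : x = v
    · exact absurd (hxv ▸ hux) hnadj
    by_cases hxv' : G.Adj x v
    · exact ⟨x, hux, hxv'⟩
    obtain ⟨w, hxw, hwv⟩ := ih hxv hxv'
    by_cases huw : G.Adj u w
    · exact ⟨w, huw, hwv⟩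
    · exact (hP₄ (pathGraph_four_isIndContained hux hxw hwv huw hnadj hxv')).elim

-- If `u` dominates `b` but `w` does not, then `b - u - w - a` is an induced `P₄`.
lemma dominates_of_dominates_of_adj_adj (hP₄ : ¬ pathGraph 4 ⊴ G) {S : Finset V}
    (hS : IndepIn G S) {u w a b : V} (huw : G.Adj u w) (hwa : G.Adj w a) (hua : ¬ G.Adj u a)
    (ha : a ∈ S) (hb : b ∈ S) (hub : u = b ∨ G.Adj u b) : w = b ∨ G.Adj w b := by
  rcases hub with rfl | hub
  · exact Or.inr huw.symm
  by_contra! hwb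
  exact hP₄ (pathGraph_four_isIndContained hub.symm huw hwa
    (fun h => hwb.2 h.symm) (hS b hb a ha) hua)

lemma exists_dominates_singleton [Fintype V] (hP₄ : ¬ pathGraph 4 ⊴ G) {S : Finset V}
    (hS : IndepIn G S) (C : G.ConnectedComponent) (hSC : ∀ b ∈ S, G.connectedComponentMk b = C) :
    ∃ v, Dominates G {v} S := by
  classical
  let dominated (v : V) : Finset V := S.filter fun b => v = b ∨ G.Adj v b
  obtain ⟨v, hvC, hmax⟩ := (univ.filter (G.connectedComponentMk · = C)).exists_max_image
    (fun v => #(dominated v)) (C.ind fun u => ⟨u, by simp⟩)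
  refine ⟨v, fun a ha => ⟨v, mem_singleton_self v, ?_⟩⟩
  by_contra! hva
  have hva_reach : G.Reachable v a :=
    ConnectedComponent.exact ((mem_filter.1 hvC).2.trans (hSC a ha).symm)
  obtain ⟨w, hvw, hwa⟩ := exists_adj_adj_of_reachable hP₄ hva_reach hva.1 hva.2
  have hwC : w ∈ univ.filter (G.connectedComponentMk · = C) := by
    simpa [← ConnectedComponent.connectedComponentMk_eq_of_adj hvw] using hvC
  have hsub : dominated v ⊂ dominated w := by
    refine (ssubset_iff_of_subset fun b hb => ?_).2 ⟨a, ?_, ?_⟩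
    · simp only [dominated, mem_filter] at hb ⊢
      exact ⟨hb.1, dominates_of_dominates_of_adj_adj hP₄ hS hvw hwa hva.2 ha hb.1 hb.2⟩
    · simp [dominated, ha, hwa]
    · simp [dominated, hva.1, hva.2]
  exact (hmax w hwC).not_gt (card_lt_card hsub)

lemma domNum_le {B D : Finset V} (h : Dominates G D B) : domNum G B ≤ #D :=
  Nat.sInf_le ⟨D, rfl, h⟩

lemma le_domNum {B : Finset V} {n : ℕ} (h : ∀ D, Dominates G D B → n ≤ #D) :
    n ≤ domNum G B :=
  le_csInf ⟨#B, B, rfl, fun b hb => ⟨b, hb, Or.inl rfl⟩⟩ (by rintro _ ⟨D, rfl, hD⟩; exact h D hD)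

lemma card_image_connectedComponentMk_le [DecidableEq G.ConnectedComponent] {B D : Finset V}
    (h : Dominates G D B) : #(B.image G.connectedComponentMk) ≤ #D := by
  refine (card_le_card fun C hC => ?_).trans (card_image_le (s := D) (f := G.connectedComponentMk))
  obtain ⟨b, hb, rfl⟩ := mem_image.1 hC
  obtain ⟨a, ha, rfl | hab⟩ := h b hb
  · exact mem_image_of_mem _ ha
  · exact mem_image.2 ⟨a, ha, ConnectedComponent.connectedComponentMk_eq_of_adj hab⟩

lemma indepIn_of_injOn_connectedComponentMk {A : Finset V}
    (h : Set.InjOn G.connectedComponentMk A) : IndepIn G A := fun _ hx _ hy hxy =>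
  G.ne_of_adj hxy (h hx hy (ConnectedComponent.connectedComponentMk_eq_of_adj hxy))

lemma domNum_le_card_connectedComponent [Fintype V] (hP₄ : ¬ pathGraph 4 ⊴ G) {A : Finset V}
    (hA : IndepIn G A) : domNum G A ≤ Nat.card G.ConnectedComponent := by
  classical
  choose v hv using fun C : G.ConnectedComponent =>
    exists_dominates_singleton hP₄ (S := A.filter (G.connectedComponentMk · = C))
      (fun x hx y hy => hA x (mem_filter.1 hx).1 y (mem_filter.1 hy).1) C
      (fun b hb => (mem_filter.1 hb).2)
  have hdom : Dominates G (univ.image v) A := fun b hb => by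
    obtain ⟨_, hvb, hb'⟩ := hv _ b (mem_filter.2 ⟨hb, rfl⟩)
    exact ⟨_, mem_image_of_mem v (mem_univ _), mem_singleton.1 hvb ▸ hb'⟩
  calc domNum G A ≤ #(univ.image v) := domNum_le hdom
    _ ≤ Nat.card G.ConnectedComponent := card_image_le.trans (by simp [Nat.card_eq_fintype_card])

lemma exists_indepIn_card_connectedComponent_le_domNum [Fintype V] :
    ∃ A : Finset V, IndepIn G A ∧ Nat.card G.ConnectedComponent ≤ domNum G A := by
  classical
  let reps : Finset V := univ.image fun C : G.ConnectedComponent => C.out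
  have hout (C : G.ConnectedComponent) : G.connectedComponentMk C.out = C := Quot.out_eq C
  have hreps : reps.image G.connectedComponentMk = univ := by
    simp [reps, image_image, Function.comp_def, hout]
  refine ⟨reps, indepIn_of_injOn_connectedComponentMk ?_, le_domNum fun D hD => ?_⟩
  · simp only [reps, coe_image, coe_univ, Set.image_univ, Set.InjOn, Set.mem_range]
    rintro _ ⟨C, rfl⟩ _ ⟨C', rfl⟩ h
    rw [hout, hout] at h
    rw [h]
  · simpa [hreps, Nat.card_eq_fintype_card] using card_image_connectedComponentMk_le hD

end SimpleGraph

/-- For a finite cograph (no induced `P₄`), `γ^i(G)` equals the number of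
connected components of `G`. -/
theorem gammaI_cograph {V : Type*} [Fintype V] (G : SimpleGraph V)
    (hcograph : ¬ ∃ f : Fin 4 ↪ V, ∀ a b : Fin 4,
      G.Adj (f a) (f b) ↔ (SimpleGraph.pathGraph 4).Adj a b) :
    gammaI G = Nat.card G.ConnectedComponent := by
  have hP₄ : ¬ pathGraph 4 ⊴ G := fun ⟨f⟩ => hcograph ⟨f.toEmbedding, fun _ _ => f.map_rel_iff⟩
  have hle : ∀ n ∈ {n | ∃ A : Finset V, IndepIn G A ∧ domNum G A = n},
      n ≤ Nat.card G.ConnectedComponent := by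
    rintro _ ⟨A, hA, rfl⟩
    exact domNum_le_card_connectedComponent hP₄ hA
  obtain ⟨A, hA, hge⟩ := exists_indepIn_card_connectedComponent_le_domNum (G := G)
  exact IsGreatest.csSup_eq ⟨⟨A, hA, le_antisymm (hle _ ⟨A, hA, rfl⟩) hge⟩, hle⟩
end

section
/- Let G=(V,E) be a finite simple graph and let M ⊆ V be an independent set such that every vertex of V \ M has at most two neighbors in M. Let H be the simple graph on vertex set M in which two distinct vertices x, y ∈ M are adjacent if and only if they have a common neighbor in V \ M (in G). Then the minimum cardinality of a set of vertices of G dominating M equals ν(H) + (|M| − 2ν(H)) = |M| − ν(H), where ν(H) is the maximum cardinality of a matching in H. -/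
/-- A matching in `H`: a set of pairwise disjoint edges of `H`. -/
def IsMatchingSet {V : Type*} (H : SimpleGraph V) (s : Finset (Sym2 V)) : Prop :=
  (∀ e ∈ s, e ∈ H.edgeSet) ∧
    ∀ e₁ ∈ s, ∀ e₂ ∈ s, e₁ ≠ e₂ → ∀ v : V, v ∈ e₁ → v ∉ e₂

/-- `ν(H)`: the maximum cardinality of a matching in `H`. -/
noncomputable def matchingNum {V : Type*} (H : SimpleGraph V) : ℕ :=
  sSup {n | ∃ s : Finset (Sym2 V), IsMatchingSet H s ∧ s.card = n}

open Finset

section Domination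

variable {V : Type*} {G : SimpleGraph V}

lemma Dominates.refl (B : Finset V) : Dominates G B B :=
  fun b hb => ⟨b, hb, Or.inl rfl⟩

lemma Dominates.mono_left {A A' B : Finset V} (h : Dominates G A B) (hA : A ⊆ A') :
    Dominates G A' B := fun b hb =>
  let ⟨a, ha, hab⟩ := h b hb
  ⟨a, hA ha, hab⟩

lemma domNum_le {A B : Finset V} (h : Dominates G A B) : domNum G B ≤ A.card :=
  Nat.sInf_le ⟨A, rfl, h⟩

lemma exists_dominates_card_eq_domNum (B : Finset V) :
    ∃ A, Dominates G A B ∧ A.card = domNum G B := by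
  obtain ⟨A, hcard, hA⟩ := Nat.sInf_mem (s := {n | ∃ A : Finset V, A.card = n ∧ Dominates G A B})
    ⟨B.card, B, rfl, Dominates.refl B⟩
  exact ⟨A, hA, hcard⟩

variable [DecidableEq V]

lemma Dominates.of_erase {A B : Finset V} {a x : V} (h : Dominates G A (B.erase x))
    (ha : a ∈ A) (hax : a = x ∨ G.Adj a x) : Dominates G A B := by
  intro b hb
  by_cases hbx : b = x
  · exact ⟨a, ha, hbx ▸ hax⟩
  · exact h b (mem_erase.2 ⟨hbx, hb⟩)

lemma Dominates.of_insert [DecidableRel G.Adj] {A B : Finset V} {a : V}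
    (h : Dominates G (insert a A) B) :
    Dominates G A (B.filter fun b => ¬(a = b ∨ G.Adj a b)) := by
  intro b hb
  obtain ⟨hbB, hab⟩ := mem_filter.1 hb
  obtain ⟨a', ha', ha'b⟩ := h b hbB
  rcases mem_insert.1 ha' with rfl | ha'A
  · exact absurd ha'b hab
  · exact ⟨a', ha'A, ha'b⟩

end Domination

section Matching

variable {V : Type*} {H : SimpleGraph V} {s t : Finset (Sym2 V)}

lemma IsMatchingSet.mono (hs : IsMatchingSet H s) (h : t ⊆ s) : IsMatchingSet H t :=
  ⟨fun e he => hs.1 e (h he), fun e₁ h₁ e₂ h₂ => hs.2 e₁ (h h₁) e₂ (h h₂)⟩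

lemma IsMatchingSet.subset_sym2 {M : Finset V} (hs : IsMatchingSet H s)
    (hH : ∀ x y, H.Adj x y → x ∈ M) : s ⊆ M.sym2 := by
  intro e he
  refine mem_sym2_iff.2 fun v hv => ?_
  obtain ⟨w, rfl⟩ := Sym2.mem_iff_exists.1 hv
  exact hH v w (hs.1 _ he)

lemma IsMatchingSet.card_le_matchingNum [Finite V] (hs : IsMatchingSet H s) :
    s.card ≤ matchingNum H := by
  refine le_csSup ((Set.finite_range (card : Finset (Sym2 V) → ℕ)).subset ?_).bddAbove
    ⟨s, hs, rfl⟩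
  rintro _ ⟨t, -, rfl⟩
  exact ⟨t, rfl⟩

lemma exists_isMatchingSet_card_eq_matchingNum [Finite V] (H : SimpleGraph V) :
    ∃ s, IsMatchingSet H s ∧ s.card = matchingNum H := by
  refine Nat.sSup_mem (s := {n | ∃ s : Finset (Sym2 V), IsMatchingSet H s ∧ s.card = n})
    ⟨0, ∅, ⟨by simp, by simp⟩, rfl⟩ ⟨matchingNum H, ?_⟩
  rintro _ ⟨t, ht, rfl⟩
  exact ht.card_le_matchingNum

variable [DecidableEq V]

lemma IsMatchingSet.insert_of_disjoint {e : Sym2 V} (hs : IsMatchingSet H s) (he : e ∈ H.edgeSet)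
    (hdisj : ∀ e' ∈ s, ∀ v ∈ e, v ∉ e') : IsMatchingSet H (insert e s) := by
  refine ⟨fun e' he' => ?_, fun e₁ h₁ e₂ h₂ hne v hv₁ hv₂ => ?_⟩
  · rcases mem_insert.1 he' with rfl | he'
    exacts [he, hs.1 e' he']
  · rcases mem_insert.1 h₁ with rfl | h₁s <;> rcases mem_insert.1 h₂ with rfl | h₂s
    · exact hne rfl
    · exact hdisj e₂ h₂s v hv₁ hv₂
    · exact hdisj e₁ h₁s v hv₂ hv₁
    · exact hs.2 e₁ h₁s e₂ h₂s hne v hv₁ hv₂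

lemma IsMatchingSet.subset_sym2_erase_of_insert {B : Finset V} {x y : V}
    (hs : IsMatchingSet H (insert s(x, y) s)) (hxy : s(x, y) ∉ s)
    (hB : insert s(x, y) s ⊆ B.sym2) : s ⊆ ((B.erase x).erase y).sym2 := by
  intro e he
  have hdisj : ∀ v ∈ s(x, y), v ∉ e :=
    hs.2 _ (mem_insert_self _ _) e (mem_insert_of_mem he) (fun h => hxy (h ▸ he))
  refine mem_sym2_iff.2 fun v hv => ?_
  have hvB := mem_sym2_iff.1 (hB (mem_insert_of_mem he)) v hv
  refine mem_erase.2 ⟨?_, mem_erase.2 ⟨?_, hvB⟩⟩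
  · rintro rfl; exact hdisj v (Sym2.mem_mk_right _ _) hv
  · rintro rfl; exact hdisj v (Sym2.mem_mk_left _ _) hv

lemma card_erase_erase_add_two {B : Finset V} {x y : V} (hxy : x ≠ y) (hx : x ∈ B)
    (hy : y ∈ B) : ((B.erase x).erase y).card + 2 = B.card := by
  have hB := card_erase_of_mem hx
  have hBx := card_erase_of_mem (mem_erase.2 ⟨hxy.symm, hy⟩)
  have := card_pos.2 ⟨y, mem_erase.2 ⟨hxy.symm, hy⟩⟩
  omega

lemma IsMatchingSet.two_mul_card_le (hs : IsMatchingSet H s) {B : Finset V}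
    (hsB : s ⊆ B.sym2) : 2 * s.card ≤ B.card := by
  induction s using Finset.induction_on generalizing B with
  | empty => simp
  | insert e s he ih =>
    induction e using Sym2.ind with
    | _ x y =>
    have hxy : x ≠ y := H.ne_of_adj (hs.1 _ (mem_insert_self _ _))
    have hB := mem_sym2_iff.1 (hsB (mem_insert_self _ _))
    have := ih (hs.mono (subset_insert _ _)) (hs.subset_sym2_erase_of_insert he hsB)
    have := card_erase_erase_add_two hxy (hB x (Sym2.mem_mk_left _ _)) (hB y (Sym2.mem_mk_right _ _))
    rw [card_insert_of_notMem he]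
    omega

end Matching

section CommonNeighbourGraph

variable {V : Type*} [DecidableEq V] {G : SimpleGraph V} {M : Finset V} {H : SimpleGraph V}

lemma exists_dominates_of_isMatchingSet (hH : ∀ x y, H.Adj x y → ∃ z, G.Adj z x ∧ G.Adj z y)
    {s : Finset (Sym2 V)} (hs : IsMatchingSet H s) {B : Finset V} (hsB : s ⊆ B.sym2) :
    ∃ A, Dominates G A B ∧ A.card + s.card ≤ B.card := by
  induction s using Finset.induction_on generalizing B with
  | empty => exact ⟨B, Dominates.refl B, by simp⟩
  | insert e s he ih =>
    induction e using Sym2.ind with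
    | _ x y =>
    have hxy : H.Adj x y := hs.1 _ (mem_insert_self _ _)
    obtain ⟨z, hzx, hzy⟩ := hH x y hxy
    have hB := mem_sym2_iff.1 (hsB (mem_insert_self _ _))
    obtain ⟨A, hA, hcard⟩ :=
      ih (hs.mono (subset_insert _ _)) (hs.subset_sym2_erase_of_insert he hsB)
    have hz : z ∈ insert z A := mem_insert_self _ _
    refine ⟨insert z A, ((hA.mono_left (subset_insert _ _)).of_erase hz (Or.inr hzy)).of_erase hz
      (Or.inr hzx), ?_⟩
    have := card_erase_erase_add_two (H.ne_of_adj hxy) (hB x (Sym2.mem_mk_left _ _))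
      (hB y (Sym2.mem_mk_right _ _))
    have := card_insert_le z A
    rw [card_insert_of_notMem he]
    omega

variable [DecidableRel G.Adj]

lemma card_filter_closedNbhd_le_two (hM : IndepIn G M)
    (hdeg : ∀ v, v ∉ M → (M.filter fun u => G.Adj v u).card ≤ 2) (a : V) :
    (M.filter fun b => a = b ∨ G.Adj a b).card ≤ 2 := by
  by_cases ha : a ∈ M
  · refine (card_le_one.2 fun b hb c hc => ?_).trans (by norm_num)
    have key : ∀ b ∈ M.filter fun b => a = b ∨ G.Adj a b, a = b := fun b hb =>
      (mem_filter.1 hb).2.resolve_right (hM a ha b (mem_filter.1 hb).1)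
    exact (key b hb).symm.trans (key c hc)
  · refine le_trans (card_le_card fun b hb => ?_) (hdeg a ha)
    obtain ⟨hbM, hab⟩ := mem_filter.1 hb
    exact mem_filter.2 ⟨hbM, hab.resolve_left fun h => ha (h ▸ hbM)⟩

lemma adj_of_mem_filter_closedNbhd (hM : IndepIn G M)
    (hH : ∀ x y, x ≠ y → x ∈ M → y ∈ M → ∀ z, z ∉ M → G.Adj z x → G.Adj z y → H.Adj x y)
    {a x y : V} (hx : x ∈ M.filter fun b => a = b ∨ G.Adj a b)
    (hy : y ∈ M.filter fun b => a = b ∨ G.Adj a b) (hxy : x ≠ y) : H.Adj x y := by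
  obtain ⟨hxM, hax⟩ := mem_filter.1 hx
  obtain ⟨hyM, hay⟩ := mem_filter.1 hy
  have ha : a ∉ M := by
    intro ha
    rcases hax with rfl | hax
    · exact hM a ha y hyM (hay.resolve_left hxy)
    · exact hM a ha x hxM hax
  have hadj : ∀ b ∈ M, a = b ∨ G.Adj a b → G.Adj a b := fun b hb hab =>
    hab.resolve_left fun h => ha (h ▸ hb)
  exact hH x y hxy hxM hyM a ha (hadj x hxM hax) (hadj y hyM hay)

lemma exists_isMatchingSet_of_dominates (hM : IndepIn G M)
    (hdeg : ∀ v, v ∉ M → (M.filter fun u => G.Adj v u).card ≤ 2)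
    (hH : ∀ x y, x ≠ y → x ∈ M → y ∈ M → ∀ z, z ∉ M → G.Adj z x → G.Adj z y → H.Adj x y)
    {A B : Finset V} (hBM : B ⊆ M) (hA : Dominates G A B) :
    ∃ s, IsMatchingSet H s ∧ s ⊆ B.sym2 ∧ B.card ≤ A.card + s.card := by
  induction A using Finset.induction_on generalizing B with
  | empty =>
    have hB : B = ∅ := eq_empty_of_forall_notMem fun b hb => by simpa using hA b hb
    exact ⟨∅, ⟨by simp, by simp⟩, empty_subset _, by simp [hB]⟩
  | insert a A haA ih =>
    set D := B.filter fun b => a = b ∨ G.Adj a b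
    set R := B.filter fun b => ¬(a = b ∨ G.Adj a b)
    obtain ⟨s, hs, hsR, hcard⟩ := ih (B := R) ((filter_subset _ _).trans hBM) hA.of_insert
    have hsB : s ⊆ B.sym2 := hsR.trans (sym2_mono (filter_subset _ _))
    have hsplit : D.card + R.card = B.card := card_filter_add_card_filter_not _
    have hD : D ⊆ M.filter fun b => a = b ∨ G.Adj a b := filter_subset_filter _ hBM
    have hD2 := (card_le_card hD).trans (card_filter_closedNbhd_le_two hM hdeg a)
    rw [card_insert_of_notMem haA]
    by_cases hD1 : D.card ≤ 1
    · exact ⟨s, hs, hsB, by omega⟩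
    -- The two vertices dominated by `a` form an edge of `H` avoiding the matching on `R`.
    obtain ⟨x, y, hxy, hDxy⟩ := card_eq_two.1 (show D.card = 2 by omega)
    have hx : x ∈ D := hDxy ▸ mem_insert_self _ _
    have hy : y ∈ D := hDxy ▸ mem_insert_of_mem (mem_singleton_self _)
    have hDs : ∀ v ∈ D, ∀ e ∈ s, v ∉ e := fun v hv e he hve =>
      (mem_filter.1 (mem_sym2_iff.1 (hsR he) v hve)).2 (mem_filter.1 hv).2
    have hdisj : ∀ e ∈ s, ∀ v ∈ s(x, y), v ∉ e := fun e he v hv => by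
      rcases Sym2.mem_iff.1 hv with rfl | rfl
      exacts [hDs v hx e he, hDs v hy e he]
    have hnew : s(x, y) ∉ s := fun h => hdisj _ h x (Sym2.mem_mk_left _ _) (Sym2.mem_mk_left _ _)
    refine ⟨insert s(x, y) s,
      hs.insert_of_disjoint (adj_of_mem_filter_closedNbhd hM hH (hD hx) (hD hy) hxy) hdisj,
      insert_subset (mem_sym2_iff.2 ?_) hsB, by rw [card_insert_of_notMem hnew]; omega⟩
    intro v hv
    rcases Sym2.mem_iff.1 hv with rfl | rfl
    exacts [(mem_filter.1 hx).1, (mem_filter.1 hy).1]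

end CommonNeighbourGraph

/-- Let `M` be an independent set such that every vertex outside `M` has at
most two neighbors in `M`, and let `H` be the graph on `M` joining two
vertices iff they have a common neighbor outside `M`.  Then
`γ_G(M) = ν(H) + (|M| - 2ν(H)) = |M| - ν(H)`. -/
theorem domNum_eq_card_sub_matchingNum {V : Type*} [Fintype V] [DecidableEq V]
    (G : SimpleGraph V) [DecidableRel G.Adj] (M : Finset V)
    (hM : IndepIn G M)
    (hdeg : ∀ v : V, v ∉ M → (M.filter (fun u => G.Adj v u)).card ≤ 2)
    (H : SimpleGraph V)
    (hH : ∀ x y : V, H.Adj x y ↔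
      x ≠ y ∧ x ∈ M ∧ y ∈ M ∧ ∃ z : V, z ∉ M ∧ G.Adj z x ∧ G.Adj z y) :
    domNum G M = matchingNum H + (M.card - 2 * matchingNum H) ∧
      domNum G M = M.card - matchingNum H := by
  obtain ⟨s, hs, hν⟩ := exists_isMatchingSet_card_eq_matchingNum H
  have hsM : s ⊆ M.sym2 := hs.subset_sym2 fun x y hxy => ((hH x y).1 hxy).2.1
  have h2ν := hs.two_mul_card_le hsM
  obtain ⟨A, hA, hAcard⟩ := exists_dominates_of_isMatchingSet (G := G)
    (fun x y hxy => let ⟨_, _, _, z, _, hzx, hzy⟩ := (hH x y).1 hxy; ⟨z, hzx, hzy⟩) hs hsM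
  have hupper := domNum_le hA
  obtain ⟨A₀, hA₀, hA₀card⟩ := exists_dominates_card_eq_domNum (G := G) M
  obtain ⟨s', hs', -, hlower⟩ := exists_isMatchingSet_of_dominates hM hdeg
    (fun x y hxy hx hy z hz hzx hzy => (hH x y).2 ⟨hxy, hx, hy, z, hz, hzx, hzy⟩) subset_rfl hA₀
  have := hs'.card_le_matchingNum
  omega
end

section
/- A finite simple graph G is a permutation graph if and only if both G and its complement are comparability graphs. Here G is a permutation graph if and only if there exist two linear orders ≤₁ and ≤₂ on the vertex set of G such that two distinct vertices x and y are adjacent in G exactly when ≤₁ and ≤₂ order them oppositely (i.e., x <₁ y and y <₂ x, or y <₁ x and x <₂ y). -/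
/-- `G` is a comparability graph: adjacency coincides with comparability in
some partial order on the vertex set. -/
def IsComparabilityGraph {V : Type*} (G : SimpleGraph V) : Prop :=
  ∃ r : V → V → Prop, IsPartialOrder V r ∧
    ∀ x y : V, G.Adj x y ↔ x ≠ y ∧ (r x y ∨ r y x)

/-- `G` is a permutation graph: there are two linear orders on the vertex set
such that two distinct vertices are adjacent exactly when the two orders
order them oppositely. -/
def IsPermutationGraph {V : Type*} (G : SimpleGraph V) : Prop :=
  ∃ r₁ r₂ : V → V → Prop, IsLinearOrder V r₁ ∧ IsLinearOrder V r₂ ∧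
    ∀ x y : V, G.Adj x y ↔ x ≠ y ∧ ((r₁ x y ∧ r₂ y x) ∨ (r₁ y x ∧ r₂ x y))

/-!
If `≤₁` and `≤₂` are linear orders, `G` is the comparability graph of `≤₁ ∩ ≥₂` and `Gᶜ` that
of `≤₁ ∩ ≤₂`. Conversely, if `P` and `Q` are partial orders whose comparability graphs are `G`
and `Gᶜ`, then every pair of distinct vertices is comparable in exactly one of them, and this
makes `P ∪ Q` and `Pᵒᵖ ∪ Q` linear orders; they agree on the edges of `Gᶜ` and disagree on the
edges of `G`.
-/

open Function Relation SimpleGraph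

section

variable {V : Type*}

theorem isComparabilityGraph_iff_exists_eq_fromRel {G : SimpleGraph V} :
    IsComparabilityGraph G ↔ ∃ r, IsPartialOrder V r ∧ G = fromRel r := by
  simp only [IsComparabilityGraph, SimpleGraph.ext_iff, funext_iff, fromRel_adj, eq_iff_iff]

theorem isPermutationGraph_iff_exists_eq_fromRel {G : SimpleGraph V} :
    IsPermutationGraph G ↔ ∃ r₁ r₂, IsLinearOrder V r₁ ∧ IsLinearOrder V r₂ ∧
      G = fromRel fun x y => r₁ x y ∧ r₂ y x := by
  simp only [IsPermutationGraph, SimpleGraph.ext_iff, funext_iff, fromRel_adj, eq_iff_iff]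

theorem fromRel_congr {r s : V → V → Prop} (h : ∀ x y, x ≠ y → (r x y ↔ s x y)) :
    fromRel r = fromRel s := by
  ext x y
  simp only [fromRel_adj]
  exact and_congr_right fun hne => or_congr (h x y hne) (h y x hne.symm)

theorem fromRel_swap (r : V → V → Prop) : fromRel (swap r) = fromRel r := by
  ext x y
  simp only [fromRel_adj, swap, or_comm]

theorem isPartialOrder_and {r s : V → V → Prop} [IsPartialOrder V r] [IsPartialOrder V s] :
    IsPartialOrder V fun x y => r x y ∧ s x y where
  refl x := ⟨refl_of r x, refl_of s x⟩
  trans _ _ _ hxy hyz := ⟨trans_of r hxy.1 hyz.1, trans_of s hxy.2 hyz.2⟩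
  antisymm _ _ hxy hyx := antisymm hxy.1 hyx.1

theorem rel_swap_iff_not_rel {r : V → V → Prop} [IsLinearOrder V r] {x y : V} (hne : x ≠ y) :
    r y x ↔ ¬r x y :=
  ⟨fun hyx hxy => hne (antisymm hxy hyx), (total_of r x y).resolve_left⟩

theorem compl_fromRel_and_swap {r s : V → V → Prop} [IsLinearOrder V r] [IsLinearOrder V s] :
    (fromRel fun x y => r x y ∧ s y x)ᶜ = fromRel fun x y => r x y ∧ s x y := by
  ext x y
  simp only [compl_adj, fromRel_adj, ne_eq, and_congr_right_iff]
  intro hne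
  simp only [rel_swap_iff_not_rel (r := r) hne, rel_swap_iff_not_rel (r := s) hne]
  tauto

section Complementary

variable {P Q : V → V → Prop}

theorem symmGen_or_symmGen_of_compl_fromRel_eq (h : (fromRel P)ᶜ = fromRel Q) {x y : V}
    (hne : x ≠ y) : SymmGen P x y ∨ SymmGen Q x y := by
  by_cases hP : SymmGen P x y
  · exact .inl hP
  · have hPc : (fromRel P)ᶜ.Adj x y :=
      (compl_adj _ x y).mpr ⟨hne, fun hPadj => hP ((fromRel_adj P x y).mp hPadj).2⟩
    rw [h, fromRel_adj] at hPc
    exact .inr hPc.2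

theorem eq_of_symmGen_of_symmGen (h : (fromRel P)ᶜ = fromRel Q) {x y : V}
    (hP : SymmGen P x y) (hQ : SymmGen Q x y) : x = y := by
  by_contra hne
  have hQadj : (fromRel Q).Adj x y := (fromRel_adj Q x y).mpr ⟨hne, hQ⟩
  rw [← h, compl_adj, fromRel_adj] at hQadj
  exact hQadj.2 ⟨hne, hP⟩

variable [IsPartialOrder V P] [IsPartialOrder V Q]

/-- If `P a c` fails, then `a, c` are comparable through `P c a` or `Q c a`; the first makes
`b, c` comparable in `P`, the second makes `a, b` comparable in `Q`, so `b = c` or `a = b`. -/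
theorem rel_or_rel_of_rel_of_rel (h : (fromRel P)ᶜ = fromRel Q) {a b c : V}
    (hab : P a b) (hbc : Q b c) : P a c ∨ Q a c := by
  by_cases hac : a = c
  · exact .inl (hac ▸ refl_of P a)
  rcases symmGen_or_symmGen_of_compl_fromRel_eq h hac with (hP | hP) | (hQ | hQ)
  · exact .inl hP
  · obtain rfl := eq_of_symmGen_of_symmGen h (.of_rel_symm (trans_of P hP hab)) (.of_rel hbc)
    exact .inl hab
  · exact .inr hQ
  · obtain rfl := eq_of_symmGen_of_symmGen h (.of_rel hab) (.of_rel_symm (trans_of Q hbc hQ))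
    exact .inr hbc

theorem isLinearOrder_or_of_compl_fromRel_eq (h : (fromRel P)ᶜ = fromRel Q) :
    IsLinearOrder V fun x y => P x y ∨ Q x y where
  refl x := .inl (refl_of P x)
  trans a b c := by
    have h' : (fromRel Q)ᶜ = fromRel P := by rw [← h, compl_compl]
    rintro (hab | hab) (hbc | hbc)
    · exact .inl (trans_of P hab hbc)
    · exact rel_or_rel_of_rel_of_rel h hab hbc
    · exact (rel_or_rel_of_rel_of_rel h' hab hbc).symm
    · exact .inr (trans_of Q hab hbc)
  antisymm a b := by
    rintro (hab | hab) (hba | hba)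
    · exact antisymm hab hba
    · exact eq_of_symmGen_of_symmGen h (.of_rel hab) (.of_rel_symm hba)
    · exact eq_of_symmGen_of_symmGen h (.of_rel_symm hba) (.of_rel hab)
    · exact antisymm hab hba
  total a b := by
    by_cases hab : a = b
    · exact .inl (.inl (hab ▸ refl_of P a))
    rcases symmGen_or_symmGen_of_compl_fromRel_eq h hab with (hP | hP) | (hQ | hQ)
    exacts [.inl (.inl hP), .inr (.inl hP), .inl (.inr hQ), .inr (.inr hQ)]

end Complementary

theorem fromRel_or_and_or_swap {P Q : V → V → Prop} [Std.Antisymm Q] :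
    (fromRel fun x y => (P x y ∨ Q x y) ∧ (P x y ∨ Q y x)) = fromRel P :=
  fromRel_congr fun _ _ hne => by
    rw [← or_and_left, or_iff_left fun hQ => hne (antisymm hQ.1 hQ.2)]

end

theorem isPermutationGraph_iff_general {V : Type*} (G : SimpleGraph V) :
    IsPermutationGraph G ↔ IsComparabilityGraph G ∧ IsComparabilityGraph Gᶜ := by
  simp only [isPermutationGraph_iff_exists_eq_fromRel, isComparabilityGraph_iff_exists_eq_fromRel]
  constructor
  · rintro ⟨r₁, r₂, h₁, h₂, rfl⟩
    exact ⟨⟨_, isPartialOrder_and, rfl⟩, ⟨_, isPartialOrder_and, compl_fromRel_and_swap⟩⟩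
  · rintro ⟨⟨P, hP, rfl⟩, ⟨Q, hQ, hPQ⟩⟩
    have hPQ' : (fromRel (swap P))ᶜ = fromRel Q := by rw [fromRel_swap, hPQ]
    exact ⟨fun x y => P x y ∨ Q x y, fun x y => P y x ∨ Q x y,
      isLinearOrder_or_of_compl_fromRel_eq hPQ, isLinearOrder_or_of_compl_fromRel_eq hPQ',
      fromRel_or_and_or_swap.symm⟩

/-- A finite graph is a permutation graph iff both it and its complement are
comparability graphs. -/
theorem isPermutationGraph_iff {V : Type*} [Fintype V] (G : SimpleGraph V) :
    IsPermutationGraph G ↔ IsComparabilityGraph G ∧ IsComparabilityGraph Gᶜ :=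
  isPermutationGraph_iff_general G
end

section
/- For all finite simple graphs G and H, γ(G □ H) ≥ (1/2)·γ(G)·γ(H) + (1/2)·min{γ(G), γ(H)}. -/
/-! Fix a minimum dominating set `U` of `A` and a map `π` sending every vertex to a dominator in
`U`; its fibres are the cells of `A`. Let `D` dominate `A □ B`, let `D_u` be the part of `D` over
the cell of `u`, `P_u` its projection to `B`, and `W_u` the set of rows whose `D`-vertices dominate
the whole cell. A vertex `b ∉ W_u` is dominated by `P_u` (some vertex `(g, b)` of the cell must be
dominated vertically), so `P_u ∪ W_u` dominates `B` and `γ(B) + |P_u ∩ W_u| ≤ |D_u| + |W_u|`.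
A row `b` lies in at most `|D ∩ row b|` of the sets `W_u`, because the row together with the
remaining cell centres dominates `A`; hence `Σ_u (|D_u| + |W_u|) ≤ 2|D|`. So either
`γ(A)(γ(B) + 1) ≤ 2|D|`, or some `u` has `P_u ∩ W_u = ∅`, which says that the column of `u`
misses `D`. Doing this for both factors, an empty column and an empty row cannot coexist, since
their common vertex would be undominated. -/

open Finset SimpleGraph

section Domination

variable {V : Type*} {G : SimpleGraph V}

lemma exists_card_eq_gamma_dominates [Fintype V] (G : SimpleGraph V) :
    ∃ A : Finset V, #A = gamma G ∧ Dominates G A univ :=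
  Nat.sInf_mem (s := {n | ∃ A : Finset V, #A = n ∧ Dominates G A univ})
    ⟨_, univ, rfl, fun b _ => ⟨b, mem_univ b, Or.inl rfl⟩⟩

lemma gamma_le_card [Fintype V] {A : Finset V} (h : Dominates G A univ) : gamma G ≤ #A :=
  Nat.sInf_le ⟨A, rfl, h⟩

lemma Dominates.map_iso {V' : Type*} [Fintype V] [Fintype V'] {G' : SimpleGraph V'}
    {A : Finset V} (h : Dominates G A univ) (e : G ≃g G') :
    Dominates G' (A.map e.toEquiv.toEmbedding) univ := by
  intro b _
  obtain ⟨a, ha, hab⟩ := h (e.symm b) (mem_univ _)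
  refine ⟨e a, mem_map_of_mem _ ha, ?_⟩
  rcases hab with rfl | hab
  · exact Or.inl (e.apply_symm_apply b)
  · exact Or.inr (by simpa using e.map_adj_iff.2 hab)

lemma Dominates.exists_retraction [Fintype V] {U : Finset V} (h : Dominates G U univ) :
    ∃ π : V → V, (∀ g, π g ∈ U) ∧ (∀ u ∈ U, π u = u) ∧ ∀ g, π g = g ∨ G.Adj (π g) g := by
  classical
  choose ρ hρU hρ using fun g => h g (mem_univ g)
  refine ⟨fun g => if g ∈ U then g else ρ g, fun g => ?_, fun u hu => if_pos hu, fun g => ?_⟩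
  all_goals by_cases hg : g ∈ U <;> simp [hg, hρU, hρ]

end Domination

namespace SuenTarr

open scoped Classical

variable {α β : Type*} {A : SimpleGraph α} {B : SimpleGraph β} {D : Finset (α × β)}
  {π : α → α} {U : Finset α}

noncomputable def row (D : Finset (α × β)) (b : β) : Finset α :=
  (D.filter (·.2 = b)).image Prod.fst

noncomputable def block (D : Finset (α × β)) (π : α → α) (u : α) : Finset (α × β) :=
  D.filter (π ·.1 = u)

noncomputable def blockProj (D : Finset (α × β)) (π : α → α) (u : α) : Finset β :=
  (block D π u).image Prod.snd

@[simp] lemma mem_row {a : α} {b : β} : a ∈ row D b ↔ (a, b) ∈ D := by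
  simp [row]

@[simp] lemma mem_blockProj {u : α} {b : β} : b ∈ blockProj D π u ↔ ∃ a, π a = u ∧ (a, b) ∈ D := by
  simp [blockProj, block, and_comm]

lemma sum_card_block (hπU : ∀ g, π g ∈ U) : ∑ u ∈ U, #(block D π u) = #D :=
  (card_eq_sum_card_fiberwise fun q _ => hπU q.1).symm

variable [Fintype α]

noncomputable def cell (π : α → α) (u : α) : Finset α := univ.filter (π · = u)

@[simp] lemma mem_cell {g u : α} : g ∈ cell π u ↔ π g = u := by
  simp [cell]

lemma gamma_add_card_covered_le (hπU : ∀ g, π g ∈ U) (hπ : ∀ g, π g = g ∨ A.Adj (π g) g)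
    (b : β) :
    gamma A + #(U.filter fun u => Dominates A (row D b) (cell π u)) ≤ #(row D b) + #U := by
  have hdom :
      Dominates A (row D b ∪ U.filter fun u => ¬ Dominates A (row D b) (cell π u)) univ := by
    intro g _
    by_cases hg : Dominates A (row D b) (cell π (π g))
    · obtain ⟨a, ha, hag⟩ := hg g (mem_cell.2 rfl)
      exact ⟨a, mem_union_left _ ha, hag⟩
    · exact ⟨π g, mem_union_right _ (mem_filter.2 ⟨hπU g, hg⟩), hπ g⟩
  have := (gamma_le_card hdom).trans (card_union_le _ _)
  have := card_filter_add_card_filter_not (s := U) fun u => Dominates A (row D b) (cell π u)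
  omega

variable [Fintype β]

noncomputable def coveredRows (A : SimpleGraph α) (D : Finset (α × β)) (π : α → α) (u : α) :
    Finset β :=
  univ.filter fun b => Dominates A (row D b) (cell π u)

@[simp] lemma mem_coveredRows {u : α} {b : β} :
    b ∈ coveredRows A D π u ↔ Dominates A (row D b) (cell π u) := by
  simp [coveredRows]

lemma dominates_blockProj_union_coveredRows (hD : Dominates (A □ B) D univ) (u : α) :
    Dominates B (blockProj D π u ∪ coveredRows A D π u) univ := by
  intro b _
  by_cases hb : ∃ p ∈ blockProj D π u, p = b ∨ B.Adj p b
  · obtain ⟨p, hp, hpb⟩ := hb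
    exact ⟨p, mem_union_left _ hp, hpb⟩
  refine ⟨b, mem_union_right _ (mem_coveredRows.2 fun g hg => ?_), Or.inl rfl⟩
  obtain ⟨⟨a, b'⟩, hq, hqg⟩ := hD (g, b) (mem_univ _)
  rcases hqg with hq' | hadj
  · obtain ⟨rfl, rfl⟩ := Prod.ext_iff.1 hq'
    exact ⟨a, mem_row.2 hq, Or.inl rfl⟩
  rcases boxProd_adj.1 hadj with ⟨ha, rfl⟩ | ⟨hb', rfl⟩
  · exact ⟨a, mem_row.2 hq, Or.inr ha⟩
  · exact absurd ⟨b', mem_blockProj.2 ⟨a, mem_cell.1 hg, hq⟩, Or.inr hb'⟩ hb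

lemma gamma_add_card_inter_le (hD : Dominates (A □ B) D univ) (u : α) :
    gamma B + #(blockProj D π u ∩ coveredRows A D π u) ≤ #(block D π u) + #(coveredRows A D π u) :=
  calc gamma B + #(blockProj D π u ∩ coveredRows A D π u)
      ≤ #(blockProj D π u ∪ coveredRows A D π u) + #(blockProj D π u ∩ coveredRows A D π u) :=
        Nat.add_le_add_right (gamma_le_card (dominates_blockProj_union_coveredRows hD u)) _
    _ = #(blockProj D π u) + #(coveredRows A D π u) := card_union_add_card_inter _ _
    _ ≤ #(block D π u) + #(coveredRows A D π u) := Nat.add_le_add_right card_image_le _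

lemma sum_card_coveredRows_le (hU : #U = gamma A) (hπU : ∀ g, π g ∈ U)
    (hπ : ∀ g, π g = g ∨ A.Adj (π g) g) : ∑ u ∈ U, #(coveredRows A D π u) ≤ #D :=
  calc ∑ u ∈ U, #(coveredRows A D π u)
      = ∑ b, #(U.filter fun u => Dominates A (row D b) (cell π u)) := by
        simp only [coveredRows, card_filter]
        exact sum_comm
    _ ≤ ∑ b, #(row D b) := sum_le_sum fun b _ => by
        have := gamma_add_card_covered_le (D := D) hπU hπ b
        omega
    _ ≤ ∑ b, #(D.filter (·.2 = b)) := sum_le_sum fun b _ => card_image_le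
    _ = #D := (card_eq_sum_card_fiberwise fun q _ => mem_univ q.2).symm

lemma column_empty_of_inter_eq_empty {u : α} (hu : π u = u) (hπ : ∀ g, π g = g ∨ A.Adj (π g) g)
    (h : blockProj D π u ∩ coveredRows A D π u = ∅) (b : β) : (u, b) ∉ D := by
  intro hub
  have hP : b ∈ blockProj D π u := mem_blockProj.2 ⟨u, hu, hub⟩
  have hW : b ∈ coveredRows A D π u := mem_coveredRows.2 fun g hg =>
    ⟨u, mem_row.2 hub, mem_cell.1 hg ▸ hπ g⟩
  simpa [h] using mem_inter.2 ⟨hP, hW⟩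

end SuenTarr

open SuenTarr in
lemma Dominates.gamma_mul_succ_le_or_column_empty {α β : Type*} [Fintype α] [Fintype β]
    {A : SimpleGraph α} {B : SimpleGraph β} {D : Finset (α × β)}
    (hD : Dominates (A □ B) D univ) :
    gamma A * (gamma B + 1) ≤ 2 * #D ∨ ∃ u, ∀ b, (u, b) ∉ D := by
  obtain ⟨U, hU, hUdom⟩ := exists_card_eq_gamma_dominates A
  obtain ⟨π, hπU, hπfix, hπ⟩ := hUdom.exists_retraction
  by_cases hall : ∀ u ∈ U, gamma B + 1 ≤ #(block D π u) + #(coveredRows A D π u)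
  · left
    calc gamma A * (gamma B + 1) = ∑ _u ∈ U, (gamma B + 1) := by simp [hU]
      _ ≤ ∑ u ∈ U, (#(block D π u) + #(coveredRows A D π u)) := sum_le_sum hall
      _ = #D + ∑ u ∈ U, #(coveredRows A D π u) := by rw [sum_add_distrib, sum_card_block hπU]
      _ ≤ 2 * #D := by linarith [sum_card_coveredRows_le (D := D) hU hπU hπ]
  · right
    push Not at hall
    obtain ⟨u, hu, hlt⟩ := hall
    have := gamma_add_card_inter_le (π := π) hD u
    exact ⟨u, column_empty_of_inter_eq_empty (hπfix u hu) hπ (card_eq_zero.1 (by omega))⟩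

lemma not_dominates_of_column_empty_of_row_empty {α β : Type*} [Fintype α] [Fintype β]
    {A : SimpleGraph α} {B : SimpleGraph β} {D : Finset (α × β)} {u : α} {v : β}
    (hu : ∀ b, (u, b) ∉ D) (hv : ∀ a, (a, v) ∉ D) : ¬ Dominates (A □ B) D univ := by
  intro hD
  obtain ⟨⟨a, b⟩, hq, hqa⟩ := hD (u, v) (mem_univ _)
  rcases hqa with hq' | hadj
  · obtain ⟨rfl, rfl⟩ := Prod.ext_iff.1 hq'
    exact hu b hq
  rcases boxProd_adj.1 hadj with ⟨-, rfl⟩ | ⟨-, rfl⟩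
  · exact hv a hq
  · exact hu b hq

/-- Suen–Tarr bound: `γ(G □ H) ≥ ½ γ(G) γ(H) + ½ min {γ(G), γ(H)}`. -/
theorem gamma_boxProd_suen_tarr {V W : Type*} [Fintype V] [Fintype W]
    (G : SimpleGraph V) (H : SimpleGraph W) :
    (gamma (G □ H) : ℝ) ≥
      (1 / 2 : ℝ) * (gamma G : ℝ) * (gamma H : ℝ) +
        (1 / 2 : ℝ) * (min (gamma G) (gamma H) : ℝ) := by
  obtain ⟨D, hD, hdom⟩ := exists_card_eq_gamma_dominates (G □ H)
  have key : gamma G * gamma H + min (gamma G) (gamma H) ≤ 2 * #D := by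
    rcases hdom.gamma_mul_succ_le_or_column_empty with h | ⟨u, hu⟩
    · nlinarith [min_le_left (gamma G) (gamma H)]
    rcases (hdom.map_iso (boxProdComm G H)).gamma_mul_succ_le_or_column_empty with h | ⟨v, hv⟩
    · rw [card_map] at h
      nlinarith [min_le_right (gamma G) (gamma H)]
    exact absurd hdom <| not_dominates_of_column_empty_of_row_empty hu fun a ha =>
      hv a (mem_map_equiv.2 ha)
  have hkey : ((gamma G * gamma H + min (gamma G) (gamma H) : ℕ) : ℝ) ≤ (2 * #D : ℕ) :=
    Nat.cast_le.2 key
  push_cast [hD] at hkey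
  linarith
end
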